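/- Let $p_1,\ldots,p_d$ be p-values separated by a filtration $\mathscr{F}_0 \subseteq \cdots \subseteq \mathscr{F}_d$, meaning: (1) for each $k$, on the event $\{k_0 \le k-1\}$ (the event that the $k$-th null is true), $\P(p_k \le \alpha \mid \mathscr{F}_{k-1}) \le \alpha$ almost surely for all $\alpha \in [0,1]$; and (2) $p_k$ and the event $\{k_0 \le k\}$ are $\mathscr{F}_k$-measurable. Then for every $k$ and all $\alpha_{k+1},\ldots,\alpha_d \in [0,1]$, almost surely on $\{k_0 = k\}$: $\P(p_{k+1} \le \alpha_{k+1}, \ldots, p_d \le \alpha_d \mid \mathscr{F}_k) \le \prod_{i=k+1}^d \alpha_i$. -/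

import Mathlib

/-!
Condition successively on `𝓕_{d-1}, …, 𝓕_k`. On `{k₀ ≤ k}` the events `{pᵢ ≤ αᵢ}` with `i > k`
all concern true nulls, and `{k₀ ≤ k} ∈ 𝓕_k`. By the tower property, conditioning
`{p_{k+1} ≤ α_{k+1}} ∩ ⋂_{i > k+1} {pᵢ ≤ αᵢ}` on `𝓕_k` is conditioning the `𝓕_{k+1}`-measurable
first event times the conditional probability of the rest given `𝓕_{k+1}`. Backward induction
bounds the latter by `∏_{i > k+1} αᵢ` on `{k₀ ≤ k+1} ⊇ {k₀ ≤ k}`, and super-uniformity bounds the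
former by `α_{k+1}`.
-/

open MeasureTheory ProbabilityTheory

namespace MeasureTheory

variable {Ω : Type*} {m m' mΩ : MeasurableSpace Ω} {μ : Measure Ω}

lemma condExp_le_condExp_on (hm : m ≤ mΩ) {E : Set Ω} (hE : MeasurableSet[m] E)
    {f g : Ω → ℝ} (hf : Integrable f μ) (hg : Integrable g μ)
    (hfg : ∀ᵐ ω ∂μ, ω ∈ E → f ω ≤ g ω) :
    ∀ᵐ ω ∂μ, ω ∈ E → μ[f | m] ω ≤ μ[g | m] ω := by
  have hmono : μ[E.indicator f | m] ≤ᵐ[μ] μ[E.indicator g | m] := by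
    refine condExp_mono (hf.indicator (hm E hE)) (hg.indicator (hm E hE)) ?_
    filter_upwards [hfg] with ω hω
    by_cases hωE : ω ∈ E
    · simpa [hωE] using hω hωE
    · simp [hωE]
  filter_upwards [hmono, condExp_indicator hf hE, condExp_indicator hg hE] with ω hω hf' hg' hωE
  simpa [hf', hg', hωE] using hω

variable [IsFiniteMeasure μ]

lemma condProb_inter_le_mul_on (hmm' : m ≤ m') (hm' : m' ≤ mΩ) {E B T : Set Ω}
    (hE : MeasurableSet[m] E) (hB : MeasurableSet[m'] B) (hT : MeasurableSet T)
    {c C : ℝ} (hC : 0 ≤ C)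
    (hBc : ∀ᵐ ω ∂μ, ω ∈ E → (μ⟦B | m⟧) ω ≤ c)
    (hTC : ∀ᵐ ω ∂μ, ω ∈ E → (μ⟦T | m'⟧) ω ≤ C) :
    ∀ᵐ ω ∂μ, ω ∈ E → (μ⟦B ∩ T | m⟧) ω ≤ c * C := by
  have hT_int : Integrable (T.indicator fun _ ↦ (1 : ℝ)) μ := (integrable_const 1).indicator hT
  have hB_int : Integrable (B.indicator fun _ ↦ (1 : ℝ)) μ :=
    (integrable_const 1).indicator (hm' B hB)
  have htower : μ⟦B ∩ T | m⟧ =ᵐ[μ] μ[B.indicator (μ⟦T | m'⟧) | m] := by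
    rw [← Set.indicator_indicator]
    exact (condExp_condExp_of_le hmm' hm').symm.trans
      (condExp_congr_ae (condExp_indicator hT_int hB))
  have hpull : ∀ᵐ ω ∂μ, ω ∈ E →
      μ[B.indicator (μ⟦T | m'⟧) | m] ω ≤ μ[C • B.indicator fun _ ↦ (1 : ℝ) | m] ω := by
    refine condExp_le_condExp_on (hmm'.trans hm') hE
      (integrable_condExp.indicator (hm' B hB)) (hB_int.smul C) ?_
    filter_upwards [hTC] with ω hω hωE
    by_cases hωB : ω ∈ B
    · simpa [hωB] using hω hωE
    · simp [hωB]
  filter_upwards [htower, hpull, condExp_smul C (B.indicator fun _ ↦ (1 : ℝ)) m, hBc]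
    with ω htowerω hpullω hsmulω hBcω hωE
  calc (μ⟦B ∩ T | m⟧) ω ≤ C * (μ⟦B | m⟧) ω := by
        simpa [htowerω, hsmulω] using hpullω hωE
    _ ≤ C * c := mul_le_mul_of_nonneg_left (hBcω hωE) hC
    _ = c * C := mul_comm C c

lemma condProb_biInter_Ioc_le_prod_on (F : Filtration ℕ mΩ) {E : ℕ → Set Ω}
    (hE_mono : Monotone E) (hE : ∀ k, MeasurableSet[F k] (E k)) {d : ℕ} {A : ℕ → Set Ω}
    (hA : ∀ i ∈ Finset.Ioc 0 d, MeasurableSet[F i] (A i)) {c : ℕ → ℝ} (hc : ∀ i, 0 ≤ c i)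
    (hAc : ∀ k < d, ∀ᵐ ω ∂μ, ω ∈ E k → (μ⟦A (k + 1) | F k⟧) ω ≤ c (k + 1))
    {k : ℕ} (hk : k ≤ d) :
    ∀ᵐ ω ∂μ, ω ∈ E k → (μ⟦⋂ i ∈ Finset.Ioc k d, A i | F k⟧) ω ≤ ∏ i ∈ Finset.Ioc k d, c i := by
  induction hk using Nat.decreasingInduction with
  | self => simp [condExp_const (F.le d)]
  | of_succ k hk ih =>
    rw [← Finset.insert_Ioc_add_one_left_eq_Ioc hk, Finset.set_biInter_insert,
      Finset.prod_insert (by simp)]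
    have hA_succ : MeasurableSet[F (k + 1)] (A (k + 1)) :=
      hA (k + 1) (Finset.mem_Ioc.2 ⟨k.succ_pos, hk⟩)
    have hT : MeasurableSet (⋂ i ∈ Finset.Ioc (k + 1) d, A i) :=
      Finset.measurableSet_biInter _ fun i hi ↦
        F.le i _ (hA i (Finset.Ioc_subset_Ioc_left (Nat.zero_le _) hi))
    refine condProb_inter_le_mul_on (F.mono k.le_succ) (F.le _) (hE k) hA_succ hT
      (Finset.prod_nonneg fun i _ ↦ hc i) (hAc k hk) ?_
    filter_upwards [ih] with ω hω hωE using hω (hE_mono k.le_succ hωE)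

end MeasureTheory

/-- separated super-uniform p-values satisfy the joint conditional
bound `∏ αᵢ` on the event `{k0 = k}`. -/
theorem separated_pvalues_joint_superuniform
    {Ω : Type*} [MeasurableSpace Ω] (μ : Measure Ω) [IsProbabilityMeasure μ]
    (d : ℕ) (F : Filtration ℕ (inferInstance : MeasurableSpace Ω))
    (p : ℕ → Ω → ℝ) (k0 : Ω → ℕ)
    -- (2) measurability: pₖ is 𝓕ₖ-measurable and {k0 ≤ k} ∈ 𝓕ₖ
    (hmeas : ∀ k, 1 ≤ k → k ≤ d → Measurable[F k] (p k))
    (hk0meas : ∀ k, MeasurableSet[F k] {ω | k0 ω ≤ k})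
    -- (1) conditional super-uniformity on the event that the k-th null is true
    (hsuper : ∀ k, 1 ≤ k → k ≤ d → ∀ a ∈ Set.Icc (0 : ℝ) 1,
      ∀ᵐ ω ∂μ, k0 ω ≤ k - 1 →
        (μ[Set.indicator {ω' | p k ω' ≤ a} (fun _ => (1 : ℝ)) | F (k - 1)]) ω ≤ a) :
    ∀ k ≤ d, ∀ a : ℕ → ℝ, (∀ i, a i ∈ Set.Icc (0 : ℝ) 1) →
      ∀ᵐ ω ∂μ, k0 ω = k →
        (μ[Set.indicator (⋂ i ∈ Finset.Ioc k d, {ω' | p i ω' ≤ a i})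
            (fun _ => (1 : ℝ)) | F k]) ω ≤ ∏ i ∈ Finset.Ioc k d, a i := by
  intro k hk a ha
  have hA (i : ℕ) (hi : i ∈ Finset.Ioc 0 d) : MeasurableSet[F i] {ω | p i ω ≤ a i} := by
    rw [Finset.mem_Ioc] at hi
    exact measurableSet_le (hmeas i hi.1 hi.2) measurable_const
  have hAc (i : ℕ) (hi : i < d) :
      ∀ᵐ ω ∂μ, k0 ω ≤ i → (μ⟦{ω | p (i + 1) ω ≤ a (i + 1)} | F i⟧) ω ≤ a (i + 1) := by
    simpa using hsuper (i + 1) (by omega) hi (a (i + 1)) (ha _)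
  have hbound := condProb_biInter_Ioc_le_prod_on F (E := fun k ↦ {ω | k0 ω ≤ k})
    (fun _ _ hij _ hω ↦ le_trans hω hij) hk0meas hA (fun i ↦ (ha i).1) hAc hk
  filter_upwards [hbound] with ω hω hk0 using hω hk0.le
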